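/- Let n ∈ ℤ₊ ∪ {∞} and let u, v ∈ C_φ^{(n+1)}. Then on (α,β) the Lie bracket of the vector fields u·X and v·X satisfies [u·X, v·X] = (u·X(v) − v·X(u))·X, and the coefficient u·X(v) − v·X(u) belongs to C_φ^{(n)}. Hence [V_φ^{(n+1)}, V_φ^{(n+1)}] ⊂ V_φ^{(n)}, where V_φ^{(m)} := { w·X : w ∈ C_φ^{(m)} }. -/

import Mathlib

open Real Set Filter Topology

/-- The open interval `(α, β)` of real numbers, where `α β` are extended reals. -/
def EI (α β : EReal) : Set ℝ := {x : ℝ | α < (x : EReal) ∧ (x : EReal) < β}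

/-- `u : ℝ → ℝ` (thought of as a function on `(α, β)`) extends to a continuous
function on `[α, β] ⊆ EReal`. -/
def ContExt (α β : EReal) (u : ℝ → ℝ) : Prop :=
  ∃ g : EReal → ℝ, ContinuousOn g (Set.Icc α β) ∧
    ∀ x : ℝ, x ∈ EI α β → g (x : EReal) = u x

/-- The operator `X u := φ · u′`. -/
noncomputable def Xop (φ u : ℝ → ℝ) : ℝ → ℝ := fun x => φ x * deriv u x

/-- The iterates `X^k u`. -/
noncomputable def Xiter (φ : ℝ → ℝ) : ℕ → (ℝ → ℝ) → (ℝ → ℝ)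
  | 0, u => u
  | n + 1, u => Xop φ (Xiter φ n u)

/-- The space `C_φ^{(n)}`: inductively, `C_φ^{(0)}` consists of the functions having a
continuous extension to `[α, β]`, and `u ∈ C_φ^{(n+1)}` iff `u ∈ C_φ^{(n)}`, `X^n u` is
differentiable on `(α, β)`, and `X^{n+1} u` extends to a continuous function on `[α, β]`. -/
def CN (α β : EReal) (φ : ℝ → ℝ) : ℕ → Set (ℝ → ℝ)
  | 0 => {u | ContExt α β u}
  | n + 1 => {u | u ∈ CN α β φ n ∧
      (∀ x ∈ EI α β, DifferentiableAt ℝ (Xiter φ n u) x) ∧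
      ContExt α β (Xiter φ (n + 1) u)}

/-- The space `C_φ^{(∞)} := ⋂ₙ C_φ^{(n)}`. -/
def Cinf (α β : EReal) (φ : ℝ → ℝ) : Set (ℝ → ℝ) := ⋂ n : ℕ, CN α β φ n

/-- The spaces `C_φ^{(n)}` for `n ∈ ℤ₊ ∪ {∞}`. -/
def CNE (α β : EReal) (φ : ℝ → ℝ) (n : ℕ∞) : Set (ℝ → ℝ) :=
  WithTop.recTopCoe (Cinf α β φ) (fun k => CN α β φ k) n

/-!
`X = φ ∂_t` is a derivation, so by induction on `n` each `C_φ^{(n)}` is closed under sums,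
differences and products, and `X` maps `C_φ^{(n+1)}` into `C_φ^{(n)}`; hence
`u X(v) − v X(u) ∈ C_φ^{(n)}`. The bracket formula is the Leibniz rule: in
`(uφ)(vφ)′ − (vφ)(uφ)′` the two terms `uvφφ′` cancel.
-/

lemma isOpen_EI (α β : EReal) : IsOpen (EI α β) :=
  isOpen_Ioo.preimage continuous_coe_real_ereal

lemma eventuallyEq_nhds_of_eqOn_EI {α β : EReal} {u v : ℝ → ℝ} (h : EqOn u v (EI α β)) {x : ℝ}
    (hx : x ∈ EI α β) : u =ᶠ[𝓝 x] v :=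
  h.eventuallyEq_of_mem ((isOpen_EI α β).mem_nhds hx)

section ContExt

variable {α β : EReal} {u v : ℝ → ℝ}

lemma ContExt.congr (hu : ContExt α β u) (h : EqOn u v (EI α β)) : ContExt α β v := by
  obtain ⟨g, hg, hgu⟩ := hu
  exact ⟨g, hg, fun x hx => (hgu x hx).trans (h hx)⟩

lemma ContExt.comp₂ {f : ℝ → ℝ → ℝ} (hf : Continuous (Function.uncurry f))
    (hu : ContExt α β u) (hv : ContExt α β v) : ContExt α β (fun x => f (u x) (v x)) := by
  obtain ⟨g, hg, hgu⟩ := hu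
  obtain ⟨h, hh, hhv⟩ := hv
  exact ⟨fun y => f (g y) (h y), hf.comp_continuousOn (hg.prodMk hh),
    fun x hx => by simp only [hgu x hx, hhv x hx]⟩

end ContExt

section Xop

variable {φ u v : ℝ → ℝ} {x : ℝ}

lemma Xiter_Xop (φ u : ℝ → ℝ) : ∀ k, Xiter φ k (Xop φ u) = Xiter φ (k + 1) u
  | 0 => rfl
  | k + 1 => by simp only [Xiter, Xiter_Xop φ u k]

lemma Xop_congr {α β : EReal} (h : EqOn u v (EI α β)) : EqOn (Xop φ u) (Xop φ v) (EI α β) :=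
  fun _ hx => by simp only [Xop, (eventuallyEq_nhds_of_eqOn_EI h hx).deriv_eq]

lemma Xop_add (hu : DifferentiableAt ℝ u x) (hv : DifferentiableAt ℝ v x) :
    Xop φ (fun y => u y + v y) x = Xop φ u x + Xop φ v x := by
  simp only [Xop, deriv_fun_add hu hv, mul_add]

lemma Xop_sub (hu : DifferentiableAt ℝ u x) (hv : DifferentiableAt ℝ v x) :
    Xop φ (fun y => u y - v y) x = Xop φ u x - Xop φ v x := by
  simp only [Xop, deriv_fun_sub hu hv, mul_sub]

lemma Xop_mul (hu : DifferentiableAt ℝ u x) (hv : DifferentiableAt ℝ v x) :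
    Xop φ (fun y => u y * v y) x = u x * Xop φ v x + v x * Xop φ u x := by
  simp only [Xop, deriv_fun_mul hu hv]
  ring

lemma mul_deriv_mul_sub_mul_deriv_mul (hφ : DifferentiableAt ℝ φ x)
    (hu : DifferentiableAt ℝ u x) (hv : DifferentiableAt ℝ v x) :
    (u x * φ x) * deriv (fun y => v y * φ y) x - (v x * φ x) * deriv (fun y => u y * φ y) x
      = (u x * Xop φ v x - v x * Xop φ u x) * φ x := by
  simp only [Xop, deriv_fun_mul hv hφ, deriv_fun_mul hu hφ]
  ring

end Xop

section CN

variable {α β : EReal} {φ u v : ℝ → ℝ} {n : ℕ}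

lemma mem_CN_succ_iff :
    u ∈ CN α β φ (n + 1) ↔ ContExt α β u ∧ (∀ x ∈ EI α β, DifferentiableAt ℝ u x) ∧
      Xop φ u ∈ CN α β φ n := by
  induction n generalizing u with
  | zero => rfl
  | succ n ih =>
    change u ∈ CN α β φ (n + 1) ∧ _ ↔ _ ∧ _ ∧ Xop φ u ∈ CN α β φ n ∧ _
    rw [ih, Xiter_Xop, Xiter_Xop]
    tauto

lemma CN_succ_subset : CN α β φ (n + 1) ⊆ CN α β φ n := fun _ hu => hu.1

lemma mem_CN_of_eqOn (hu : u ∈ CN α β φ n) (h : EqOn u v (EI α β)) : v ∈ CN α β φ n := by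
  induction n generalizing u v with
  | zero => exact ContExt.congr hu h
  | succ n ih =>
    obtain ⟨hc, hd, hX⟩ := mem_CN_succ_iff.mp hu
    exact mem_CN_succ_iff.mpr ⟨hc.congr h,
      fun x hx => (eventuallyEq_nhds_of_eqOn_EI h hx).differentiableAt_iff.mp (hd x hx),
      ih hX (Xop_congr h)⟩

lemma add_mem_CN (hu : u ∈ CN α β φ n) (hv : v ∈ CN α β φ n) :
    (fun x => u x + v x) ∈ CN α β φ n := by
  induction n generalizing u v with
  | zero => exact ContExt.comp₂ continuous_add hu hv
  | succ n ih =>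
    obtain ⟨huc, hud, hXu⟩ := mem_CN_succ_iff.mp hu
    obtain ⟨hvc, hvd, hXv⟩ := mem_CN_succ_iff.mp hv
    exact mem_CN_succ_iff.mpr ⟨ContExt.comp₂ continuous_add huc hvc,
      fun x hx => (hud x hx).add (hvd x hx),
      mem_CN_of_eqOn (ih hXu hXv) fun x hx => (Xop_add (hud x hx) (hvd x hx)).symm⟩

lemma sub_mem_CN (hu : u ∈ CN α β φ n) (hv : v ∈ CN α β φ n) :
    (fun x => u x - v x) ∈ CN α β φ n := by
  induction n generalizing u v with
  | zero => exact ContExt.comp₂ continuous_sub hu hv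
  | succ n ih =>
    obtain ⟨huc, hud, hXu⟩ := mem_CN_succ_iff.mp hu
    obtain ⟨hvc, hvd, hXv⟩ := mem_CN_succ_iff.mp hv
    exact mem_CN_succ_iff.mpr ⟨ContExt.comp₂ continuous_sub huc hvc,
      fun x hx => (hud x hx).sub (hvd x hx),
      mem_CN_of_eqOn (ih hXu hXv) fun x hx => (Xop_sub (hud x hx) (hvd x hx)).symm⟩

lemma mul_mem_CN (hu : u ∈ CN α β φ n) (hv : v ∈ CN α β φ n) :
    (fun x => u x * v x) ∈ CN α β φ n := by
  induction n generalizing u v with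
  | zero => exact ContExt.comp₂ continuous_mul hu hv
  | succ n ih =>
    obtain ⟨huc, hud, hXu⟩ := mem_CN_succ_iff.mp hu
    obtain ⟨hvc, hvd, hXv⟩ := mem_CN_succ_iff.mp hv
    have hXuv : (fun x => u x * Xop φ v x + v x * Xop φ u x) ∈ CN α β φ n :=
      add_mem_CN (ih (CN_succ_subset hu) hXv) (ih (CN_succ_subset hv) hXu)
    exact mem_CN_succ_iff.mpr ⟨ContExt.comp₂ continuous_mul huc hvc,
      fun x hx => (hud x hx).mul (hvd x hx),
      mem_CN_of_eqOn hXuv fun x hx => (Xop_mul (hud x hx) (hvd x hx)).symm⟩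

lemma bracketCoeff_mem_CN (hu : u ∈ CN α β φ (n + 1)) (hv : v ∈ CN α β φ (n + 1)) :
    (fun x => u x * Xop φ v x - v x * Xop φ u x) ∈ CN α β φ n :=
  sub_mem_CN (mul_mem_CN (CN_succ_subset hu) (mem_CN_succ_iff.mp hv).2.2)
    (mul_mem_CN (CN_succ_subset hv) (mem_CN_succ_iff.mp hu).2.2)

end CN

lemma mem_CNE_top {α β : EReal} {φ u : ℝ → ℝ} : u ∈ CNE α β φ ⊤ ↔ ∀ k, u ∈ CN α β φ k :=
  mem_iInter

theorem bracket_Vphi_general (α β : EReal) (φ : ℝ → ℝ)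
    (hφd : ∀ x ∈ EI α β, DifferentiableAt ℝ φ x)
    (n : ℕ∞) (u v : ℝ → ℝ)
    (hu : u ∈ CNE α β φ (n + 1)) (hv : v ∈ CNE α β φ (n + 1)) :
    (∀ x ∈ EI α β,
        (u x * φ x) * deriv (fun y => v y * φ y) x
            - (v x * φ x) * deriv (fun y => u y * φ y) x
          = (u x * Xop φ v x - v x * Xop φ u x) * φ x) ∧
      (fun x => u x * Xop φ v x - v x * Xop φ u x) ∈ CNE α β φ n := by
  obtain ⟨k, hu₁, hv₁, hcoeff⟩ : ∃ k, u ∈ CN α β φ (k + 1) ∧ v ∈ CN α β φ (k + 1) ∧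
      (fun x => u x * Xop φ v x - v x * Xop φ u x) ∈ CNE α β φ n := by
    induction n using ENat.recTopCoe with
    | top =>
      rw [top_add, mem_CNE_top] at hu hv
      exact ⟨0, hu 1, hv 1, mem_CNE_top.mpr fun k => bracketCoeff_mem_CN (hu (k + 1)) (hv (k + 1))⟩
    | coe k =>
      rw [← ENat.natCast_one, ← ENat.natCast_add] at hu hv
      exact ⟨k, hu, hv, bracketCoeff_mem_CN hu hv⟩
  refine ⟨fun x hx => mul_deriv_mul_sub_mul_deriv_mul (hφd x hx) ?_ ?_, hcoeff⟩
  · exact (mem_CN_succ_iff.mp hu₁).2.1 x hx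
  · exact (mem_CN_succ_iff.mp hv₁).2.1 x hx

/-- for `u, v ∈ C_φ^{(n+1)}` (with `n ∈ ℤ₊ ∪ {∞}`), on `(α,β)` the Lie
bracket of the vector fields `u·X = (uφ)∂_t` and `v·X = (vφ)∂_t` (with
`[f∂_t, g∂_t] = (f g′ − g f′)∂_t`) equals `(u·X(v) − v·X(u))·X`, and the coefficient
`u·X(v) − v·X(u)` belongs to `C_φ^{(n)}`.  Hence
`[V_φ^{(n+1)}, V_φ^{(n+1)}] ⊆ V_φ^{(n)}`. -/
theorem bracket_Vphi (α β : EReal) (hαβ : α < β) (φ : ℝ → ℝ)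
    (hφc : ContinuousOn φ (EI α β)) (hφpos : ∀ x ∈ EI α β, 0 < φ x)
    (hφd : ∀ x ∈ EI α β, DifferentiableAt ℝ φ x)
    (n : ℕ∞) (u v : ℝ → ℝ)
    (hu : u ∈ CNE α β φ (n + 1)) (hv : v ∈ CNE α β φ (n + 1)) :
    (∀ x ∈ EI α β,
        (u x * φ x) * deriv (fun y => v y * φ y) x
            - (v x * φ x) * deriv (fun y => u y * φ y) x
          = (u x * Xop φ v x - v x * Xop φ u x) * φ x) ∧
      (fun x => u x * Xop φ v x - v x * Xop φ u x) ∈ CNE α β φ n :=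
  bracket_Vphi_general α β φ hφd n u v hu hv
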